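/- arXiv:2503.19432 — 3 statements merged into one kernel-verified Lean document; each statement's English description precedes it below -/
import Mathlib

section
/- Let n ≥ 2 and u ∈ ℤ^{nd}. Given an n-particle cube Λ_L^{(n)}(u), there exists a finite collection of n-particle cubes {Λ_{A(n,L)}^{(n)}(u^i)}, i = 1,…,K(u,n,L), of radius A(n,L) ≤ 2n(L+r₀), with K(u,n,L) ≤ n^n, such that if v ∉ ∪_{i=1}^{K(u,n,L)} Λ_{A(n,L)}^{(n)}(u^i), then the pair of cubes Λ_L^{(n)}(u) and Λ_L^{(n)}(v) is weakly separable. -/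
open MeasureTheory ProbabilityTheory

namespace MP

/-- A point of the single-particle lattice `ℤ^d`. -/
abbrev Pt (d : ℕ) := Fin d → ℤ

/-- A configuration of `n` particles in `ℤ^d`, i.e. a point of `ℤ^{nd}`. -/
abbrev Cfg (n d : ℕ) := Fin n → Pt d

/-- The max-norm `‖x‖ = max_i |x_i|` on `ℤ^d`. -/
def ptNorm {d : ℕ} (x : Pt d) : ℕ := Finset.univ.sup fun i => (x i).natAbs

/-- The max-norm `‖x‖ = max_j ‖x_j‖` on `ℤ^{nd}`. -/
def cfgNorm {n d : ℕ} (x : Cfg n d) : ℕ := Finset.univ.sup fun j => ptNorm (x j)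

/-- `⟨x⟩ = max {1, ‖x‖}`. -/
def jap {n d : ℕ} (x : Cfg n d) : ℕ := max 1 (cfgNorm x)

/-- The `n`-particle cube of radius `L` centered at `u`. -/
noncomputable def cube {n d : ℕ} (L : ℕ) (u : Cfg n d) : Finset (Cfg n d) :=
  Finset.Icc (fun j i => u j i - (L : ℤ)) (fun j i => u j i + (L : ℤ))

/-- Partial projection `Π_J Λ = ∪_{j∈J} Π_j Λ ⊆ ℤ^d`. -/
def projJ {n d : ℕ} (J : Finset (Fin n)) (Λ : Finset (Cfg n d)) : Finset (Pt d) :=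
  J.biUnion fun j => Λ.image fun x => x j

/-- Full projection `ΠΛ = ∪_{j=1}^n Π_j Λ ⊆ ℤ^d`. -/
def projFull {n d : ℕ} (Λ : Finset (Cfg n d)) : Finset (Pt d) := projJ Finset.univ Λ

/-- Weak separability of the pair of `n`-particle cubes `Λ_L(u)`, `Λ_L(v)`. -/
def WeaklySeparable {n d : ℕ} (r0 L : ℕ) (u v : Cfg n d) : Prop :=
  ∃ J : Finset (Fin n), J.Nonempty ∧
    (projJ J (cube (L + r0) u) ∩
        (projJ Jᶜ (cube (L + r0) u) ∪ projFull (cube (L + r0) v)) = ∅ ∨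
      projJ J (cube (L + r0) v) ∩
        (projJ Jᶜ (cube (L + r0) v) ∪ projFull (cube (L + r0) u)) = ∅)

/-- Separability: weak separability together with `‖u - v‖ > 11 n L`. -/
def Separable {n d : ℕ} (r0 L : ℕ) (u v : Cfg n d) : Prop :=
  WeaklySeparable r0 L u v ∧ 11 * n * L < cfgNorm (u - v)

/-- Complete separability: disjoint full projections of the `(L+r₀)`-cubes. -/
def CompletelySeparable {n d : ℕ} (r0 L : ℕ) (u v : Cfg n d) : Prop :=
  projFull (cube (L + r0) u) ∩ projFull (cube (L + r0) v) = ∅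

/-- Distance `dist(u, 𝔻₀) = min_{x ∈ ℤ^d} max_j ‖u_j - x‖` to the diagonal. -/
noncomputable def diagDist {n d : ℕ} (u : Cfg n d) : ℕ :=
  sInf {m : ℕ | ∃ x : Pt d, ∀ j, ptNorm (u j - x) ≤ m}

/-- Fully interactive cube. -/
def IsFI {n d : ℕ} (r0 L : ℕ) (u : Cfg n d) : Prop := diagDist u ≤ 2 * n * (L + r0)

/-- Partially interactive cube. -/
def IsPI {n d : ℕ} (r0 L : ℕ) (u : Cfg n d) : Prop := ¬ IsFI r0 L u

/-- The power-law long-range hopping kernel (Assumption A):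
`T(x,y) = ⟨y_j - x_j⟩^{-r}` if `x_i = y_i` for all `i ≠ j`, and `0` otherwise. -/
noncomputable def hopT {n d : ℕ} (r : ℝ) (x y : Cfg n d) : ℝ :=
  if h : ∃ j, ∀ i, i ≠ j → x i = y i then
    ((max 1 (ptNorm (y h.choose - x h.choose)) : ℕ) : ℝ) ^ (-r)
  else 0

/-- The total interaction `U(x) = ∑_{j₁ < j₂} U(x_{j₁}, x_{j₂})` (Assumption B). -/
def pairU {n d : ℕ} (U : Pt d → Pt d → ℝ) (x : Cfg n d) : ℝ :=
  ∑ p ∈ Finset.univ.filter (fun p : Fin n × Fin n => p.1 < p.2), U (x p.1) (x p.2)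

/-- The `n`-particle Hamiltonian kernel
`H(x,y) = g⁻¹ (T(x,y) + δ_{xy} U(x)) + δ_{xy} ∑_j v(x_j)`
for a fixed realization `v : ℤ^d → ℝ` of the potential. -/
noncomputable def ham {n d : ℕ} (g r : ℝ) (U : Pt d → Pt d → ℝ) (v : Pt d → ℝ)
    (x y : Cfg n d) : ℝ :=
  (1 / g) * (hopT r x y + if x = y then pairU U x else 0) +
    (if x = y then ∑ j, v (x j) else 0)

/-- `G` is the Green's function `(H_Λ - E)⁻¹` of the restriction of `H` to `Λ`
with Dirichlet boundary conditions. -/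
def IsGreen {n d : ℕ} (Λ : Finset (Cfg n d)) (H : Cfg n d → Cfg n d → ℝ) (E : ℝ)
    (G : Cfg n d → Cfg n d → ℝ) : Prop :=
  (∀ x y, (x ∉ Λ ∨ y ∉ Λ) → G x y = 0) ∧
  (∀ x ∈ Λ, ∀ y ∈ Λ,
    ∑ z ∈ Λ, (H x z - if x = z then E else 0) * G z y = if x = y then 1 else 0) ∧
  (∀ x ∈ Λ, ∀ y ∈ Λ,
    ∑ z ∈ Λ, G x z * (H z y - if z = y then E else 0) = if x = y then 1 else 0)

/-- `E` belongs to the spectrum of `H_Λ`, i.e. `H_Λ - E` is not invertible. -/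
def SingE {n d : ℕ} (Λ : Finset (Cfg n d)) (H : Cfg n d → Cfg n d → ℝ) (E : ℝ) : Prop :=
  ¬ ∃ G, IsGreen Λ H E G

/-- Sobolev norm of a kernel supported on `Λ × Λ`:
`‖K‖_s² = C₀ ∑_{v} (sup_{x-y=v} |K(x,y)|)² ⟨v⟩^{2s}`. -/
noncomputable def sobNorm {n d : ℕ} (C0 : ℝ) (Λ : Finset (Cfg n d))
    (K : Cfg n d → Cfg n d → ℝ) (s : ℝ) : ℝ :=
  Real.sqrt (C0 * ∑ v ∈ (Λ ×ˢ Λ).image (fun p => p.1 - p.2),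
    ((((Λ ×ˢ Λ).filter (fun p => p.1 - p.2 = v)).sup
        (fun p => ‖K p.1 p.2‖₊) : NNReal) : ℝ) ^ 2 * ((jap v : ℕ) : ℝ) ^ (2 * s))

/-- `Λ` (a cube of radius `L`) is `(E,δ)`-nonsingular: the Green's function exists and
`‖G_Λ(E)‖_s ≤ L^{τ + δ s}` for all `s ∈ [s₀, r_n]`. -/
def IsNS {n d : ℕ} (C0 τ δ s0 rn : ℝ) (L : ℕ) (Λ : Finset (Cfg n d))
    (H : Cfg n d → Cfg n d → ℝ) (E : ℝ) : Prop :=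
  ∃ G, IsGreen Λ H E G ∧
    ∀ s : ℝ, s0 ≤ s → s ≤ rn → sobNorm C0 Λ G s ≤ (L : ℝ) ^ (τ + δ * s)

/-- `Λ` (a cube of radius `L`) is `E`-resonant: `dist(E, σ(H_Λ)) < L^{-β}`. -/
def IsER {n d : ℕ} (β : ℝ) (L : ℕ) (Λ : Finset (Cfg n d))
    (H : Cfg n d → Cfg n d → ℝ) (E : ℝ) : Prop :=
  ∃ E' : ℝ, SingE Λ H E' ∧ |E - E'| < (L : ℝ) ^ (-β)

/-- The scales `L_k = L₀^{4^k}`. -/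
def Lscale (L0 k : ℕ) : ℕ := L0 ^ (4 ^ k)

/-- `p^{(m)} = 18^{N-m} p₀`. -/
def pexp (N : ℕ) (p0 : ℝ) (m : ℕ) : ℝ := 18 ^ (N - m) * p0

/-- The energy interval `I = [-MN-1, MN+1]`. -/
def Ibox (M : ℝ) (N : ℕ) : Set ℝ := Set.Icc (-(M * N) - 1) (M * N + 1)

/-- Property `(SS.N.I.k.n)` at scale `Lk`: for every pair of separable `n`-particle
cubes of radius `Lk`, the probability that for some `E ∈ I` both cubes are
`(E,1/2)`-singular is `< Lk^{-2 p^{(n)}}`. -/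
def SSprop {d : ℕ} (n : ℕ) {Ω : Type} [MeasurableSpace Ω] (P : Measure Ω)
    (V : Pt d → Ω → ℝ) (g r : ℝ) (U : Pt d → Pt d → ℝ) (C0 : ℝ)
    (τ s0 rn : ℝ) (I : Set ℝ) (r0 Lk : ℕ) (pn : ℝ) : Prop :=
  ∀ u v : Cfg n d, Separable r0 Lk u v →
    P {ω | ∃ E ∈ I,
        ¬ IsNS C0 τ (1/2) s0 rn Lk (cube Lk u) (ham g r U fun a => V a ω) E ∧
        ¬ IsNS C0 τ (1/2) s0 rn Lk (cube Lk v) (ham g r U fun a => V a ω) E} <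
      ENNReal.ofReal ((Lk : ℝ) ^ (-(2 * pn)))

/-- The cube `Λ_{Lk1}(u)` is `(1/2, I)`-tunneling: it contains two separable
`(E,1/2)`-singular cubes of radius `Lk` for some `E ∈ I`. -/
def IsT {n d : ℕ} (C0 τ s0 rn : ℝ) (I : Set ℝ) (g r : ℝ) (U : Pt d → Pt d → ℝ)
    (v : Pt d → ℝ) (r0 Lk Lk1 : ℕ) (u : Cfg n d) : Prop :=
  ∃ E ∈ I, ∃ x y : Cfg n d,
    cube Lk x ⊆ cube Lk1 u ∧ cube Lk y ⊆ cube Lk1 u ∧ Separable r0 Lk x y ∧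
    ¬ IsNS C0 τ (1/2) s0 rn Lk (cube Lk x) (ham g r U v) E ∧
    ¬ IsNS C0 τ (1/2) s0 rn Lk (cube Lk y) (ham g r U v) E

/-- Restriction of a kernel to `Λ × Λ`. -/
def restrictKer {n d : ℕ} (Λ : Finset (Cfg n d)) (K : Cfg n d → Cfg n d → ℝ) :
    Cfg n d → Cfg n d → ℝ :=
  fun x y => if x ∈ Λ ∧ y ∈ Λ then K x y else 0

/-- Continuity modulus `ς(ε) = sup_t (μ(t+ε] - μ(t])` of the distribution function of `μ`. -/
noncomputable def contMod (μ : Measure ℝ) (ε : ℝ) : ℝ :=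
  ⨆ t : ℝ, (μ (Set.Ioc t (t + ε))).toReal

/-!
Write `R = L + r₀` and let `δ_j` be the distance from `v_j` to the nearest particle `u_k`. If every
`δ_j ≤ 2nR`, then `v` lies in the cube of radius `2nR` around a configuration `(u_{σ(1)}, …, u_{σ(n)})`,
and there are `n^n` such configurations. Otherwise some `δ_{j₀} > n · 2R`, and by pigeonhole one of the
`n` intervals `(2Rs, 2R(s+1)]`, `s < n`, contains none of the other `n - 1` values `δ_j`: a gap
`(t, t + 2R]` below `δ_{j₀}`. With `J = {j | δ_j > t + 2R}`, the triangle inequality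
shows that the `R`-balls around the `v_j`, `j ∈ J`, miss both the `R`-balls around the other `v_k`
and those around all `u_k`.
-/

section Norm

variable {d : ℕ}

lemma ptNorm_le_iff (x : Pt d) (m : ℕ) : ptNorm x ≤ m ↔ ∀ i, (x i).natAbs ≤ m := by
  simp [ptNorm, Finset.sup_le_iff]

lemma ptNorm_sub_comm (a b : Pt d) : ptNorm (a - b) = ptNorm (b - a) := by
  simp only [ptNorm, Pi.sub_apply, ← Int.natAbs_neg (b _ - a _), neg_sub]

lemma ptNorm_sub_le_add (a b c : Pt d) : ptNorm (a - c) ≤ ptNorm (a - b) + ptNorm (b - c) := by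
  rw [ptNorm_le_iff]
  intro i
  have hab := (ptNorm_le_iff (a - b) _).1 le_rfl i
  have hbc := (ptNorm_le_iff (b - c) _).1 le_rfl i
  simp only [Pi.sub_apply] at hab hbc ⊢
  omega

end Norm

section Cube

variable {n d : ℕ}

lemma mem_cube {L : ℕ} {c x : Cfg n d} : x ∈ cube L c ↔ ∀ j, ptNorm (x j - c j) ≤ L := by
  simp only [cube, Finset.mem_Icc, Pi.le_def, ptNorm_le_iff, Pi.sub_apply]
  constructor
  · rintro ⟨hlo, hhi⟩ j i
    have := hlo j i
    have := hhi j i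
    omega
  · intro h
    constructor <;> intro j i <;> (have := h j i; omega)

lemma exists_ptNorm_sub_le_of_mem_projJ_cube {J : Finset (Fin n)} {L : ℕ} {c : Cfg n d}
    {x : Pt d} (hx : x ∈ projJ J (cube L c)) : ∃ j ∈ J, ptNorm (x - c j) ≤ L := by
  simp only [projJ, Finset.mem_biUnion, Finset.mem_image] at hx
  obtain ⟨j, hj, y, hy, rfl⟩ := hx
  exact ⟨j, hj, mem_cube.1 hy j⟩

end Cube

lemma exists_gap_below {ι : Type*} [Fintype ι] (f : ι → ℕ) (g : ℕ) {j₀ : ι}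
    (hj₀ : Fintype.card ι * g < f j₀) :
    ∃ t, (∀ j, f j ≤ t ∨ t + g < f j) ∧ t + g < f j₀ := by
  classical
  -- `(f j - 1) / g = s` exactly when `f j ∈ (s g, s g + g]` (and `g > 0`)
  let occupied := (Finset.univ.erase j₀).image fun j => (f j - 1) / g
  have hcard : occupied.card < (Finset.range (Fintype.card ι)).card := by
    have := Fintype.card_pos_iff.2 ⟨j₀⟩
    refine Finset.card_image_le.trans_lt ?_
    simp only [Finset.card_erase_of_mem (Finset.mem_univ _), Finset.card_univ, Finset.card_range]
    omega
  obtain ⟨s, hs_mem, hs_free⟩ := Finset.exists_mem_notMem_of_card_lt_card hcard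
  have hs : s + 1 ≤ Fintype.card ι := Finset.mem_range.1 hs_mem
  have hfar : s * g + g < f j₀ := by nlinarith
  refine ⟨s * g, fun j => ?_, hfar⟩
  by_contra! hj
  have hs_succ : (s + 1) * g = s * g + g := by ring
  refine hs_free (Finset.mem_image.2 ⟨j, Finset.mem_erase.2 ⟨?_, Finset.mem_univ _⟩, ?_⟩)
  · rintro rfl
    omega
  · exact Nat.div_eq_of_lt_le (by omega) (by omega)

section CenterDist

variable {ι : Type*} {d : ℕ}

noncomputable def centerDist (c : ι → Pt d) (x : Pt d) : ℕ := ⨅ k, ptNorm (x - c k)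

lemma centerDist_le (c : ι → Pt d) (x : Pt d) (k : ι) : centerDist c x ≤ ptNorm (x - c k) :=
  ciInf_le (OrderBot.bddBelow _) k

lemma exists_centerDist_eq [Nonempty ι] (c : ι → Pt d) (x : Pt d) :
    ∃ k, centerDist c x = ptNorm (x - c k) :=
  (ciInf_mem fun k => ptNorm (x - c k)).imp fun _ hk => hk.symm

lemma centerDist_le_add [Nonempty ι] (c : ι → Pt d) (x y : Pt d) :
    centerDist c x ≤ ptNorm (x - y) + centerDist c y := by
  obtain ⟨k, hk⟩ := exists_centerDist_eq c y
  rw [hk]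
  exact (centerDist_le c x k).trans (ptNorm_sub_le_add _ _ _)

end CenterDist

lemma exists_mem_cube_of_forall_centerDist_le {n d A : ℕ} {u v : Cfg n d}
    (h : ∀ j, centerDist u (v j) ≤ A) : ∃ σ : Fin n → Fin n, v ∈ cube A (fun j => u (σ j)) := by
  choose σ hσ using fun j => (haveI : Nonempty (Fin n) := ⟨j⟩; exists_centerDist_eq u (v j))
  exact ⟨σ, mem_cube.2 fun j => hσ j ▸ h j⟩

lemma weaklySeparable_of_gap {n d r0 L t : ℕ} {u v : Cfg n d} {j₀ : Fin n}
    (hgap : ∀ j, centerDist u (v j) ≤ t ∨ t + 2 * (L + r0) < centerDist u (v j))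
    (hfar : t + 2 * (L + r0) < centerDist u (v j₀)) : WeaklySeparable r0 L u v := by
  classical
  refine ⟨Finset.univ.filter fun j => t + 2 * (L + r0) < centerDist u (v j),
    ⟨j₀, by simpa using hfar⟩, Or.inr (Finset.eq_empty_iff_forall_notMem.2 fun x hx => ?_)⟩
  obtain ⟨hxJ, hx_rest⟩ := Finset.mem_inter.1 hx
  obtain ⟨j, hjJ, hxj⟩ := exists_ptNorm_sub_le_of_mem_projJ_cube hxJ
  have hj : t + 2 * (L + r0) < centerDist u (v j) := (Finset.mem_filter.1 hjJ).2
  have hnear : ∀ y, ptNorm (x - y) ≤ L + r0 → ptNorm (v j - y) ≤ 2 * (L + r0) := fun y hy => by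
    have := ptNorm_sub_le_add (v j) x y
    rw [ptNorm_sub_comm (v j) x] at this
    omega
  rcases Finset.mem_union.1 hx_rest with hx' | hx'
  · obtain ⟨k, hkJ, hxk⟩ := exists_ptNorm_sub_le_of_mem_projJ_cube hx'
    have hk : centerDist u (v k) ≤ t := (hgap k).resolve_right (by simpa using hkJ)
    have : Nonempty (Fin n) := ⟨j⟩
    have := centerDist_le_add u (v j) (v k)
    have := hnear _ hxk
    omega
  · obtain ⟨k, -, hxk⟩ := exists_ptNorm_sub_le_of_mem_projJ_cube hx'
    have := centerDist_le u (v j) k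
    have := hnear _ hxk
    omega

theorem statement1_general {n d : ℕ} (r0 : ℕ)
    (L : ℕ) (u : Cfg n d) :
    ∃ (K A : ℕ) (w : Fin K → Cfg n d), K ≤ n ^ n ∧ A ≤ 2 * n * (L + r0) ∧
      ∀ v : Cfg n d, (∀ i : Fin K, v ∉ cube A (w i)) → WeaklySeparable r0 L u v := by
  refine ⟨n ^ n, 2 * n * (L + r0), fun i j => u (finFunctionFinEquiv.symm i j), le_rfl, le_rfl,
    fun v hv => ?_⟩
  obtain ⟨j₀, hj₀⟩ : ∃ j₀, 2 * n * (L + r0) < centerDist u (v j₀) := by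
    by_contra! hnear
    obtain ⟨σ, hσ⟩ := exists_mem_cube_of_forall_centerDist_le hnear
    exact hv (finFunctionFinEquiv σ) (by simpa using hσ)
  obtain ⟨t, hgap, hfar⟩ := exists_gap_below (fun j => centerDist u (v j)) (2 * (L + r0))
    (j₀ := j₀) (by rwa [Fintype.card_fin, ← mul_assoc, mul_comm n 2])
  exact weaklySeparable_of_gap hgap hfar

/-- Lemma 2.2(a): a finite collection of at most `n^n` cubes of radius
`A(n,L) ≤ 2n(L+r₀)` covers all centers `v` for which `Λ_L(u)`, `Λ_L(v)` may fail to be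
weakly separable. -/
theorem statement1 {n d : ℕ} (hn : 2 ≤ n) (hd : 1 ≤ d) (r0 : ℕ) (hr0 : 1 ≤ r0)
    (L : ℕ) (u : Cfg n d) :
    ∃ (K A : ℕ) (w : Fin K → Cfg n d), K ≤ n ^ n ∧ A ≤ 2 * n * (L + r0) ∧
      ∀ v : Cfg n d, (∀ i : Fin K, v ∉ cube A (w i)) → WeaklySeparable r0 L u v :=
  statement1_general r0 L u

end MP
end

section
/- If an n-particle cube Λ_L^{(n)}(u) is partially interactive (PI), then there exist two complementary non-empty index subsets J, J^C ⊂ {1,…,n} such that Π_J Λ_{L+r₀}^{(n)}(u) ∩ Π_{J^C} Λ_{L+r₀}^{(n)}(u) = ∅. -/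
/-!
If in every coordinate the particle positions `u j i` spread over at most `4nR` (`R = L + r₀`),
the coordinatewise midpoint of their range is within `2nR` of every particle, so `u` would be
fully interactive. Hence some coordinate has spread `> 4nR ≥ n · 2R`, and since at most `n`
values lie in it, it contains a gap longer than `2R`: the particles below the gap and those
above it have disjoint `R`-neighbourhoods.
-/

open MeasureTheory ProbabilityTheory

namespace MP

theorem Int.exists_natAbs_sub_le_of_forall_le_add {ι : Type*} [Fintype ι] (b : ι → ℤ) (m : ℕ)
    (h : ∀ j k, b k ≤ b j + 2 * m) : ∃ c : ℤ, ∀ j, (b j - c).natAbs ≤ m := by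
  rcases isEmpty_or_nonempty ι with hι | hι
  · exact ⟨0, isEmptyElim⟩
  obtain ⟨j₀, -, hj₀⟩ := Finset.exists_mem_eq_inf' Finset.univ_nonempty b
  refine ⟨b j₀ + m, fun j => ?_⟩
  have hmin : b j₀ ≤ b j := hj₀ ▸ Finset.inf'_le _ (Finset.mem_univ j)
  have := h j₀ j
  omega

theorem Int.exists_gap_of_add_card_mul_lt (g : ℕ) :
    ∀ (s : Finset ℤ) {x y : ℤ}, x ∈ s → y ∈ s → x + s.card * g < y →
      ∃ c, x ≤ c ∧ c < y ∧ ∀ z ∈ s, z ≤ c ∨ c + g < z := by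
  intro s
  induction s using Finset.strongInduction with
  | H s ih =>
    intro x y hx hy hxy
    have hxy' : x < y := by
      have : (0 : ℤ) ≤ s.card * g := by positivity
      omega
    by_cases hgap : ∀ z ∈ s, z ≤ x ∨ x + g < z
    · exact ⟨x, le_rfl, hxy', hgap⟩
    push Not at hgap
    obtain ⟨z, hz, hxz, hzx⟩ := hgap
    -- Erasing `x` and restarting from `z ≤ x + g` costs one `g` and one element.
    have hcard : ((s.erase x).card : ℤ) = s.card - 1 := by
      rw [Finset.card_erase_of_mem hx, Nat.cast_pred (Finset.card_pos.mpr ⟨x, hx⟩)]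
    obtain ⟨c, hzc, hcy, hc⟩ := ih (s.erase x) (Finset.erase_ssubset hx)
      (Finset.mem_erase.mpr ⟨hxz.ne', hz⟩) (Finset.mem_erase.mpr ⟨hxy'.ne', hy⟩)
      (by rw [hcard]; nlinarith)
    refine ⟨c, by omega, hcy, fun w hw => ?_⟩
    by_cases hwx : w = x
    · exact Or.inl (by omega)
    · exact hc w (Finset.mem_erase.mpr ⟨hwx, hw⟩)

variable {n d : ℕ}

theorem diagDist_le_of_forall_le_add {u : Cfg n d} {m : ℕ}
    (h : ∀ i j k, u k i ≤ u j i + 2 * m) : diagDist u ≤ m := by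
  choose x hx using fun i => Int.exists_natAbs_sub_le_of_forall_le_add (fun j => u j i) m (h i)
  exact Nat.sInf_le ⟨x, fun j => Finset.sup_le fun i _ => hx i j⟩

theorem IsPI.exists_add_lt {r0 L : ℕ} {u : Cfg n d} (hPI : IsPI r0 L u) :
    ∃ i j k, u j i + 2 * (2 * n * (L + r0) : ℕ) < u k i := by
  by_contra! h
  exact hPI (diagDist_le_of_forall_le_add h)

theorem exists_of_mem_projJ_cube {J : Finset (Fin n)} {R : ℕ} {u : Cfg n d} {y : Pt d}
    (hy : y ∈ projJ J (cube R u)) : ∃ j ∈ J, ∀ i, u j i - R ≤ y i ∧ y i ≤ u j i + R := by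
  simp only [projJ, Finset.mem_biUnion, Finset.mem_image, cube, Finset.mem_Icc] at hy
  obtain ⟨j, hj, x, ⟨hlo, hhi⟩, rfl⟩ := hy
  exact ⟨j, hj, fun i => ⟨hlo j i, hhi j i⟩⟩

theorem disjoint_projJ_cube {J K : Finset (Fin n)} {R : ℕ} {u : Cfg n d} (i : Fin d)
    (h : ∀ j ∈ J, ∀ k ∈ K, u j i + 2 * R < u k i) :
    Disjoint (projJ J (cube R u)) (projJ K (cube R u)) := by
  refine Finset.disjoint_left.mpr fun y hyJ hyK => ?_
  obtain ⟨j, hj, hyj⟩ := exists_of_mem_projJ_cube hyJ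
  obtain ⟨k, hk, hyk⟩ := exists_of_mem_projJ_cube hyK
  have := h j hj k hk
  have := hyj i
  have := hyk i
  omega

theorem statement3_general {n d : ℕ} (r0 : ℕ) (L : ℕ) (u : Cfg n d) (hPI : IsPI r0 L u) :
    ∃ J : Finset (Fin n), J.Nonempty ∧ Jᶜ.Nonempty ∧
      projJ J (cube (L + r0) u) ∩ projJ Jᶜ (cube (L + r0) u) = ∅ := by
  obtain ⟨i, j, k, hjk⟩ := hPI.exists_add_lt
  set R := L + r0
  set s := Finset.univ.image fun l => u l i
  have hs : (s.card : ℤ) * (2 * R : ℕ) ≤ 2 * (2 * n * R : ℕ) := by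
    have : s.card ≤ n := Finset.card_image_le.trans_eq (Finset.card_fin n)
    push_cast
    nlinarith
  obtain ⟨c, hjc, hck, hgap⟩ := Int.exists_gap_of_add_card_mul_lt (2 * R) s
    (Finset.mem_image_of_mem _ (Finset.mem_univ j)) (Finset.mem_image_of_mem _ (Finset.mem_univ k))
    (by omega)
  refine ⟨Finset.univ.filter fun l => u l i ≤ c, ⟨j, by simpa using hjc⟩, ⟨k, by simpa using hck⟩,
    Finset.disjoint_iff_inter_eq_empty.mp (disjoint_projJ_cube i fun l hl m hm => ?_)⟩
  simp only [Finset.mem_filter, Finset.mem_univ, true_and, Finset.compl_filter, not_le] at hl hm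
  have := (hgap _ (Finset.mem_image_of_mem _ (Finset.mem_univ m))).resolve_left hm.not_ge
  push_cast at this
  omega

/-- a PI cube admits two complementary nonempty index sets with disjoint
partial projections of the `(L+r₀)`-enlarged cube. -/
theorem statement3 {n d : ℕ} (hn : 1 ≤ n) (hd : 1 ≤ d) (r0 : ℕ) (hr0 : 1 ≤ r0)
    (L : ℕ) (u : Cfg n d) (hPI : IsPI r0 L u) :
    ∃ J : Finset (Fin n), J.Nonempty ∧ Jᶜ.Nonempty ∧
      projJ J (cube (L + r0) u) ∩ projJ Jᶜ (cube (L + r0) u) = ∅ :=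
  statement3_general r0 L u hPI

end MP
end

section
/- Assume that property (SS.N.I.k.ñ) holds for all ñ ∈ [1,n−1]. Then for every n-particle PI cube Λ_{L_{k+1}}^{(n)}(u), ℙ{Λ_{L_{k+1}}^{(n)}(u) is (1/2,I)-PT} ≤ 3^{2(n−1)d} L_{k+1}^{−p^{(n−1)}/2 + 2(n−1)d}. -/
open MeasureTheory ProbabilityTheory

namespace MP

/-! A `(1/2,I)`-tunneling cube of radius `L_{k+1} = L_k^4` contains two separable singular
cubes of radius `L_k` whose centres lie in `Λ_{L_{k+1}-L_k}(u)`. There are at most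
`(2 L_{k+1})^{2n'd}` such pairs, and by `(SS.N.I.k.n')` each pair is singular with probability
`< L_k^{-2p^{(n')}} = L_{k+1}^{-p^{(n')}/2}`. Adding the bounds for the two factors of the
canonical decomposition, both with `n' ≤ n-1`, and using `2 · 4^{(n-1)d} ≤ 9^{(n-1)d}`
gives the claim. -/

theorem card_cube {n d : ℕ} (L : ℕ) (u : Cfg n d) :
    (cube L u).card = (2 * L + 1) ^ (n * d) := by
  have hcoord : ∀ z : ℤ, (Finset.Icc (z - L) (z + L)).card = 2 * L + 1 := fun z => by
    rw [Int.card_Icc]; omega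
  simp only [cube, Pi.card_Icc, hcoord, Finset.prod_const, Finset.card_univ, Fintype.card_fin,
    ← pow_mul, Nat.mul_comm d n]

theorem mem_cube_of_cube_subset {n d l L : ℕ} {u x : Cfg n d} (h : cube l x ⊆ cube L u) :
    x ∈ cube (L - l) u := by
  have hne : (fun j i => x j i - (l : ℤ)) ≤ (fun j i => x j i + (l : ℤ)) := fun j i => by
    simp only; omega
  rw [cube, cube, Finset.Icc_subset_Icc_iff hne] at h
  obtain ⟨hlow, hupp⟩ := h
  refine Finset.mem_Icc.2 ⟨fun j i => ?_, fun j i => ?_⟩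
  · have := hlow j i; simp only at this ⊢; omega
  · have := hupp j i; simp only at this ⊢; omega

theorem Lscale_succ (L0 k : ℕ) : Lscale L0 (k + 1) = Lscale L0 k ^ 4 := by
  rw [Lscale, Lscale, pow_succ, pow_mul]

theorem pexp_anti {N m m' : ℕ} {p0 : ℝ} (hp0 : 0 ≤ p0) (h : m ≤ m') :
    pexp N p0 m' ≤ pexp N p0 m :=
  mul_le_mul_of_nonneg_right (pow_le_pow_right₀ (by norm_num) (Nat.sub_le_sub_left h N)) hp0

theorem four_pow_mul_rpow_mono {N d m m' : ℕ} {p0 L : ℝ} (hp0 : 0 ≤ p0) (hL : 1 ≤ L)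
    (h : m ≤ m') :
    (4 : ℝ) ^ (m * d) * L ^ (-pexp N p0 m / 2 + 2 * ((m * d : ℕ) : ℝ)) ≤
      (4 : ℝ) ^ (m' * d) * L ^ (-pexp N p0 m' / 2 + 2 * ((m' * d : ℕ) : ℝ)) := by
  have hmd : m * d ≤ m' * d := Nat.mul_le_mul_right d h
  have hp := pexp_anti (N := N) hp0 h
  have hexp : ((m * d : ℕ) : ℝ) ≤ ((m' * d : ℕ) : ℝ) := by exact_mod_cast hmd
  exact mul_le_mul (pow_le_pow_right₀ (by norm_num) hmd)
    (Real.rpow_le_rpow_of_exponent_le hL (by linarith)) (by positivity) (by positivity)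

theorem two_mul_four_pow_le_nine_pow {s : ℕ} (hs : 1 ≤ s) : 2 * 4 ^ s ≤ 9 ^ s := by
  obtain ⟨t, rfl⟩ := Nat.exists_eq_add_of_le' hs
  have : 4 ^ t ≤ 9 ^ t := Nat.pow_le_pow_left (by norm_num) t
  rw [pow_succ, pow_succ]
  omega

theorem card_mul_rpow_le {k l : ℕ} {p : ℝ} (hl : 1 ≤ l) :
    ((((2 * (l ^ 4 - l) + 1) ^ k) ^ 2 : ℕ) : ℝ) * (l : ℝ) ^ (-(2 * p)) ≤
      (4 : ℝ) ^ k * ((l ^ 4 : ℕ) : ℝ) ^ (-p / 2 + 2 * (k : ℝ)) := by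
  have hL : (0 : ℝ) < ((l ^ 4 : ℕ) : ℝ) := by positivity
  have hcount : ((2 * (l ^ 4 - l) + 1) ^ k) ^ 2 ≤ 4 ^ k * (l ^ 4) ^ (2 * k) := by
    have hside : 2 * (l ^ 4 - l) + 1 ≤ 2 * l ^ 4 := by
      have := Nat.le_self_pow (n := 4) (by norm_num) l
      generalize l ^ 4 = L at *; omega
    calc ((2 * (l ^ 4 - l) + 1) ^ k) ^ 2 ≤ ((2 * l ^ 4) ^ k) ^ 2 := by gcongr
      _ = 4 ^ k * (l ^ 4) ^ (2 * k) := by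
        rw [pow_mul (l ^ 4) 2 k, ← mul_pow, ← pow_mul, mul_comm k 2, pow_mul]
        congr 1
        ring
  have hscale : (l : ℝ) ^ (-(2 * p)) = ((l ^ 4 : ℕ) : ℝ) ^ (-p / 2) := by
    rw [Nat.cast_pow, ← Real.rpow_natCast, ← Real.rpow_mul (Nat.cast_nonneg _)]
    ring_nf
  calc ((((2 * (l ^ 4 - l) + 1) ^ k) ^ 2 : ℕ) : ℝ) * (l : ℝ) ^ (-(2 * p))
      ≤ ((4 ^ k * (l ^ 4) ^ (2 * k) : ℕ) : ℝ) * ((l ^ 4 : ℕ) : ℝ) ^ (-p / 2) := by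
        rw [hscale]; gcongr
    _ = _ := by
        rw [Real.rpow_add hL, show (2 : ℝ) * k = ((2 * k : ℕ) : ℝ) by push_cast; ring,
          Real.rpow_natCast]
        push_cast
        ring

section Tunneling

variable {n d : ℕ} {Ω : Type} (V : Pt d → Ω → ℝ)
  (g r : ℝ) (U : Pt d → Pt d → ℝ) (C0 τ s0 rn : ℝ) (I : Set ℝ) (r0 : ℕ)

def bothSingular (l : ℕ) (x y : Cfg n d) : Set Ω :=
  {ω | ∃ E ∈ I,
    ¬ IsNS C0 τ (1/2) s0 rn l (cube l x) (ham g r U fun a => V a ω) E ∧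
    ¬ IsNS C0 τ (1/2) s0 rn l (cube l y) (ham g r U fun a => V a ω) E}

open scoped Classical in
theorem setOf_isT_subset (l L : ℕ) (u : Cfg n d) :
    {ω | IsT C0 τ s0 rn I g r U (fun a => V a ω) r0 l L u} ⊆
      ⋃ p ∈ (cube (L - l) u ×ˢ cube (L - l) u).filter (fun p => Separable r0 l p.1 p.2),
        bothSingular V g r U C0 τ s0 rn I l p.1 p.2 := by
  rintro ω ⟨E, hE, x, y, hx, hy, hsep, hsingx, hsingy⟩
  refine Set.mem_biUnion (x := (x, y)) ?_ ⟨E, hE, hsingx, hsingy⟩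
  exact Finset.mem_filter.2
    ⟨Finset.mem_product.2 ⟨mem_cube_of_cube_subset hx, mem_cube_of_cube_subset hy⟩, hsep⟩

theorem measure_isT_le_card_mul [MeasurableSpace Ω] (P : Measure Ω) {l L : ℕ} {pn : ℝ}
    (hSS : SSprop n P V g r U C0 τ s0 rn I r0 l pn) (u : Cfg n d) :
    P {ω | IsT C0 τ s0 rn I g r U (fun a => V a ω) r0 l L u} ≤
      (((2 * (L - l) + 1) ^ (n * d)) ^ 2 : ℕ) * ENNReal.ofReal ((l : ℝ) ^ (-(2 * pn))) := by
  classical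
  set pairs := (cube (L - l) u ×ˢ cube (L - l) u).filter (fun p => Separable r0 l p.1 p.2)
  have hcard : pairs.card ≤ ((2 * (L - l) + 1) ^ (n * d)) ^ 2 := by
    refine (Finset.card_filter_le _ _).trans ?_
    rw [Finset.card_product, card_cube, sq]
  calc P {ω | IsT C0 τ s0 rn I g r U (fun a => V a ω) r0 l L u}
      ≤ P (⋃ p ∈ pairs, bothSingular V g r U C0 τ s0 rn I l p.1 p.2) :=
        measure_mono (setOf_isT_subset V g r U C0 τ s0 rn I r0 l L u)
    _ ≤ ∑ p ∈ pairs, P (bothSingular V g r U C0 τ s0 rn I l p.1 p.2) :=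
        measure_biUnion_finset_le _ _
    _ ≤ ∑ _p ∈ pairs, ENNReal.ofReal ((l : ℝ) ^ (-(2 * pn))) :=
        Finset.sum_le_sum fun p hp => (hSS p.1 p.2 (Finset.mem_filter.1 hp).2).le
    _ ≤ _ := by
        rw [Finset.sum_const, nsmul_eq_mul]
        gcongr

theorem measure_isT_le [MeasurableSpace Ω] (P : Measure Ω) {l : ℕ} {pn : ℝ} (hl : 1 ≤ l)
    (hSS : SSprop n P V g r U C0 τ s0 rn I r0 l pn) (u : Cfg n d) :
    P {ω | IsT C0 τ s0 rn I g r U (fun a => V a ω) r0 l (l ^ 4) u} ≤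
      ENNReal.ofReal
        ((4 : ℝ) ^ (n * d) * ((l ^ 4 : ℕ) : ℝ) ^ (-pn / 2 + 2 * ((n * d : ℕ) : ℝ))) := by
  refine (measure_isT_le_card_mul V g r U C0 τ s0 rn I r0 P hSS u).trans ?_
  rw [← ENNReal.ofReal_natCast, ← ENNReal.ofReal_mul (Nat.cast_nonneg _)]
  exact ENNReal.ofReal_le_ofReal (card_mul_rpow_le hl)

end Tunneling

theorem statement7_general {d N : ℕ} (hd : 1 ≤ d)
    (n1 n2 : ℕ) (hn1 : 1 ≤ n1) (hn2 : 1 ≤ n2)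
    {Ω : Type} [MeasurableSpace Ω] (P : Measure Ω)
    (V : Pt d → Ω → ℝ)
    (M : ℝ)
    (U : Pt d → Pt d → ℝ) (r0 : ℕ)
    (g r C0 : ℝ)
    (p0 : ℝ) (hp0 : 20 * N * d ≤ p0)
    (τ s0 rn : ℕ → ℝ)
    (L0 k : ℕ) (hL0 : 2 ≤ L0)
    (hSS : ∀ m, 1 ≤ m → m ≤ n1 + n2 - 1 →
        SSprop (d := d) m P V g r U C0 (τ m) (s0 m) (rn m) (Ibox M N) r0
          (Lscale L0 k) (pexp N p0 m))
    (u1 : Cfg n1 d) (u2 : Cfg n2 d) :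
    P {ω | IsT C0 (τ n1) (s0 n1) (rn n1) (Ibox M N) g r U (fun a => V a ω) r0
            (Lscale L0 k) (Lscale L0 (k + 1)) u1 ∨
           IsT C0 (τ n2) (s0 n2) (rn n2) (Ibox M N) g r U (fun a => V a ω) r0
            (Lscale L0 k) (Lscale L0 (k + 1)) u2} ≤
      ENNReal.ofReal ((3 : ℝ) ^ (2 * (n1 + n2 - 1) * d) *
        (Lscale L0 (k + 1) : ℝ) ^
          (-(pexp N p0 (n1 + n2 - 1)) / 2 + 2 * ((n1 + n2 - 1) * d : ℕ))) := by
  rw [Lscale_succ]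
  set m := n1 + n2 - 1
  set l := Lscale L0 k
  set X : ℝ := ((l ^ 4 : ℕ) : ℝ) ^ (-(pexp N p0 m) / 2 + 2 * ((m * d : ℕ) : ℝ))
  have hp0 : 0 ≤ p0 := le_trans (by positivity) hp0
  have hl : 1 ≤ l := Nat.one_le_pow _ _ (by omega)
  have hL : (1 : ℝ) ≤ ((l ^ 4 : ℕ) : ℝ) := by exact_mod_cast Nat.one_le_pow _ _ hl
  have hbound : ∀ j, 1 ≤ j → j ≤ m → ∀ u : Cfg j d,
      P {ω | IsT C0 (τ j) (s0 j) (rn j) (Ibox M N) g r U (fun a => V a ω) r0 l (l ^ 4) u} ≤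
        ENNReal.ofReal ((4 : ℝ) ^ (m * d) * X) := fun j hj hjm u =>
    (measure_isT_le V g r U C0 _ _ _ _ r0 P hl (hSS j hj hjm) u).trans
      (ENNReal.ofReal_le_ofReal (four_pow_mul_rpow_mono hp0 hL hjm))
  have hcoeff : (2 : ℝ) * 4 ^ (m * d) ≤ 3 ^ (2 * m * d) := by
    rw [mul_assoc 2 m d, pow_mul (3 : ℝ) 2, show (3 : ℝ) ^ 2 = 9 by norm_num]
    exact_mod_cast two_mul_four_pow_le_nine_pow (Nat.mul_le_mul (by omega : 1 ≤ m) hd)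
  calc P _ ≤ _ + _ := measure_union_le _ _
    _ ≤ ENNReal.ofReal (4 ^ (m * d) * X) + ENNReal.ofReal (4 ^ (m * d) * X) :=
        add_le_add (hbound n1 hn1 (by omega) u1) (hbound n2 hn2 (by omega) u2)
    _ = ENNReal.ofReal (2 * 4 ^ (m * d) * X) := by
        rw [← ENNReal.ofReal_add (by positivity) (by positivity)]; ring_nf
    _ ≤ _ := ENNReal.ofReal_le_ofReal (by gcongr)

/-- Lemma 3.3: if `(SS.N.I.k.ñ)` holds for all `ñ ∈ [1,n-1]`, then for
every `n`-particle PI cube `Λ_{L_{k+1}}(u)` (with canonical decomposition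
`u = (u', u'')`), the probability that it is `(1/2,I)`-partially tunneling is at most
`3^{2(n-1)d} L_{k+1}^{-p^{(n-1)}/2 + 2(n-1)d}`. -/
theorem statement7 {d N : ℕ} (hd : 1 ≤ d) (hN : 2 ≤ N)
    (n1 n2 : ℕ) (hn1 : 1 ≤ n1) (hn2 : 1 ≤ n2) (hnN : n1 + n2 ≤ N)
    {Ω : Type} [MeasurableSpace Ω] (P : Measure Ω) [IsProbabilityMeasure P]
    (V : Pt d → Ω → ℝ) (hVmeas : ∀ a, Measurable (V a))
    (μ : Measure ℝ) [IsProbabilityMeasure μ]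
    (hiid : iIndepFun V P)
    (hlaw : ∀ a, P.map (V a) = μ)
    (M : ℝ) (hM : 0 < M) (hsupp : μ (Set.Icc (-M) M) = 1)
    (ρ κ : ℝ) (hρ : 0 < ρ) (hκ : 0 < κ)
    (hHolder : ∃ κ0 > 0, ∀ a b : ℝ, a ≤ b → b - a ≤ κ0 →
        μ (Set.Icc a b) ≤ ENNReal.ofReal (κ⁻¹ * (b - a) ^ ρ))
    (U : Pt d → Pt d → ℝ) (r0 : ℕ) (hr0 : 1 ≤ r0) (M1 : ℝ)
    (hUbdd : ∀ x x', |U x x'| ≤ M1) (hUsym : ∀ x x', U x x' = U x' x)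
    (hUfin : ∀ x x', (r0 : ℕ) ≤ ptNorm (x - x') → U x x' = 0)
    (g r C0 : ℝ) (hC0 : 0 < C0)
    (p0 : ℝ) (hp0 : 20 * N * d ≤ p0)
    (τ s0 rn : ℕ → ℝ)
    (L0 k : ℕ) (hL0 : 2 ≤ L0)
    (hSS : ∀ m, 1 ≤ m → m ≤ n1 + n2 - 1 →
        SSprop (d := d) m P V g r U C0 (τ m) (s0 m) (rn m) (Ibox M N) r0
          (Lscale L0 k) (pexp N p0 m))
    (u1 : Cfg n1 d) (u2 : Cfg n2 d)
    (hPI : IsPI r0 (Lscale L0 (k + 1)) (Fin.append u1 u2))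
    (hdecomp : projFull (cube (Lscale L0 (k + 1) + r0) u1) ∩
        projFull (cube (Lscale L0 (k + 1) + r0) u2) = ∅) :
    P {ω | IsT C0 (τ n1) (s0 n1) (rn n1) (Ibox M N) g r U (fun a => V a ω) r0
            (Lscale L0 k) (Lscale L0 (k + 1)) u1 ∨
           IsT C0 (τ n2) (s0 n2) (rn n2) (Ibox M N) g r U (fun a => V a ω) r0
            (Lscale L0 k) (Lscale L0 (k + 1)) u2} ≤
      ENNReal.ofReal ((3 : ℝ) ^ (2 * (n1 + n2 - 1) * d) *
        (Lscale L0 (k + 1) : ℝ) ^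
          (-(pexp N p0 (n1 + n2 - 1)) / 2 + 2 * ((n1 + n2 - 1) * d : ℕ))) :=
  statement7_general hd n1 n2 hn1 hn2 P V M U r0 g r C0 p0 hp0 τ s0 rn L0 k hL0 hSS u1 u2

end MP
end
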